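/- arXiv:1912.01932 — 5 statements merged into one kernel-verified Lean document; each statement's English description precedes it below -/
import Mathlib

section
/- Let G be a Hausdorff topological groupoid and let V ⊆ G be a subset such that for every open subset U of the unit space G⁽⁰⁾ one has UV = VU (as setwise products). Then V ⊆ Iso(G), i.e., every x ∈ V satisfies s(x) = r(x). -/
open CategoryTheory

/-- The set of arrows of a groupoid `C`, as a sigma type. -/
abbrev GE (C : Type*) [Groupoid C] := Σ a b : C, a ⟶ b

namespace GE

variable {C : Type*} [Groupoid C]

/-- The source unit `s(g) = g⁻¹ g` of an arrow, as an (identity) arrow. -/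
def srcU (g : GE C) : GE C := ⟨g.1, g.1, 𝟙 g.1⟩

/-- The range unit `r(g) = g g⁻¹` of an arrow, as an (identity) arrow. -/
def ranU (g : GE C) : GE C := ⟨g.2.1, g.2.1, 𝟙 g.2.1⟩

/-- The unit space `G⁽⁰⁾`, viewed as the set of identity arrows. -/
def unitSpace (C : Type*) [Groupoid C] : Set (GE C) := {g | ∃ a : C, g = ⟨a, a, 𝟙 a⟩}

/-- The isotropy bundle `Iso(G) = {g : s(g) = r(g)}`. -/
def isoSet (C : Type*) [Groupoid C] : Set (GE C) := {g | srcU g = ranU g}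

/-- The product `g₁ g₂` of two composable arrows (`s(g₁) = r(g₂)`). -/
def gmul (g₁ g₂ : GE C) (h : g₂.2.1 = g₁.1) : GE C :=
  ⟨g₂.1, g₁.2.1, g₂.2.2 ≫ eqToHom h ≫ g₁.2.2⟩

/-- The inverse of an arrow. -/
def ginv (g : GE C) : GE C := ⟨g.2.1, g.1, Groupoid.inv g.2.2⟩

/-- Setwise product `UV = {g₁ g₂ : g₁ ∈ U, g₂ ∈ V, s(g₁) = r(g₂)}`. -/
def setMul (U V : Set (GE C)) : Set (GE C) :=
  {x | ∃ g₁ ∈ U, ∃ g₂ ∈ V, ∃ h : g₂.2.1 = g₁.1, x = gmul g₁ g₂ h}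

/-- A bisection: a set of arrows on which both source and range are injective. -/
def IsBisection (V : Set (GE C)) : Prop := Set.InjOn srcU V ∧ Set.InjOn ranU V

end GE
/-- If `G` is a topological groupoid with Hausdorff unit space and `V ⊆ G` satisfies
`UV = VU` for every open subset `U` of the unit space, then `V ⊆ Iso(G)`. -/
theorem subset_iso_of_comm_with_open_units {C : Type*} [Groupoid C]
    [TopologicalSpace (GE C)] [T2Space (GE.unitSpace C)]
    (htg : Continuous (fun g : GE C => GE.ginv g) ∧
      Continuous (fun p : {p : GE C × GE C // p.2.2.1 = p.1.1} => GE.gmul p.1.1 p.1.2 p.2))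
    (V : Set (GE C))
    (hcomm : ∀ U : Set (GE C), U ⊆ GE.unitSpace C →
      (∃ O : Set (GE C), IsOpen O ∧ U = O ∩ GE.unitSpace C) →
      GE.setMul U V = GE.setMul V U) :
    V ⊆ GE.isoSet C := by
  intro x hxV
  obtain ⟨a, b, f⟩ := x
  show GE.srcU _ = GE.ranU _
  by_cases hab : a = b
  · subst hab; rfl
  exfalso
  set pa : GE.unitSpace C := ⟨⟨a, a, 𝟙 a⟩, ⟨a, rfl⟩⟩ with hpa
  set pb : GE.unitSpace C := ⟨⟨b, b, 𝟙 b⟩, ⟨b, rfl⟩⟩ with hpb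
  have hpab : pa ≠ pb := by
    intro h
    exact hab (congrArg (fun p : GE.unitSpace C => p.1.1) h)
  obtain ⟨u, v, hu, hv, hau, hbv, huv⟩ := t2_separation hpab
  obtain ⟨O, hO, hOv⟩ := isOpen_induced_iff.mp hv
  set U : Set (GE C) := Subtype.val '' v with hU
  have hUsub : U ⊆ GE.unitSpace C := by
    rintro g ⟨⟨g', hg'⟩, _, rfl⟩; exact hg'
  have hUO : U = O ∩ GE.unitSpace C := by
    ext g
    constructor
    · rintro ⟨⟨g', hg'⟩, hgv, rfl⟩
      rw [← hOv] at hgv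
      exact ⟨hgv, hg'⟩
    · rintro ⟨hgO, hgU⟩
      exact ⟨⟨g, hgU⟩, by rw [← hOv]; exact hgO, rfl⟩
  have key := hcomm U hUsub ⟨O, hO, hUO⟩
  have hxUV : (⟨a, b, f⟩ : GE C) ∈ GE.setMul U V := by
    refine ⟨⟨b, b, 𝟙 b⟩, ⟨pb, hbv, rfl⟩, ⟨a, b, f⟩, hxV, rfl, ?_⟩
    simp [GE.gmul]
  rw [key] at hxUV
  obtain ⟨g₁, hg₁, g₂, hg₂, h, hx⟩ := hxUV
  obtain ⟨c, hc⟩ := hUsub hg₂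
  subst hc
  have hca : c = a := (congrArg (fun p : GE C => p.1) hx).symm
  subst hca
  have hpav : pa ∈ v := by
    obtain ⟨p, hpv, hp⟩ := hg₂
    have : p = pa := Subtype.ext hp
    rwa [this] at hpv
  exact (Set.disjoint_left.mp huv hau) hpav
end

section
/- Let G be an ample Hausdorff groupoid and R a commutative ring with unit. Then the Steinberg algebra A_R(Iso(G)°) (spanned by indicator functions 1_V of compact open bisections V contained in the interior of the isotropy) is contained in the centraliser of A_R(G⁽⁰⁾) inside A_R(G): for all f ∈ A_R(Iso(G)°) and g ∈ A_R(G⁽⁰⁾), f * g = g * f under convolution. -/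
open CategoryTheory

namespace GE

variable {C : Type*} [Groupoid C]

section Top

variable [TopologicalSpace (GE C)]

/-- `G` is a topological groupoid: inversion and composition are continuous. -/
def IsTopologicalGroupoid (C : Type*) [Groupoid C] [TopologicalSpace (GE C)] : Prop :=
  Continuous (fun g : GE C => ginv g) ∧
    Continuous (fun p : {p : GE C × GE C // p.2.2.1 = p.1.1} => gmul p.1.1 p.1.2 p.2)

/-- A compact open bisection. -/
def IsCompactOpenBisection (V : Set (GE C)) : Prop :=
  IsCompact V ∧ IsOpen V ∧ IsBisection V

/-- `G` is ample: étale (the source map is a local homeomorphism) with a basis of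
compact open bisections. -/
def IsAmple (C : Type*) [Groupoid C] [TopologicalSpace (GE C)] : Prop :=
  IsLocalHomeomorph (fun g : GE C => srcU g) ∧
    TopologicalSpace.IsTopologicalBasis {V : Set (GE C) | IsCompactOpenBisection V}

variable (R : Type*) [CommRing R]

/-- The Steinberg algebra carrier: locally constant compactly supported functions. -/
def steinbergSet (C : Type*) [Groupoid C] [TopologicalSpace (GE C)] (R : Type*) [CommRing R] :
    Set (GE C → R) :=
  {f | IsLocallyConstant f ∧ HasCompactSupport f}

/-- Convolution: `(f * g)(x) = ∑_{x = g₁ g₂} f(g₁) g(g₂)`. -/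
noncomputable def conv (f g : GE C → R) : GE C → R := fun x =>
  ∑ᶠ p ∈ {p : GE C × GE C | ∃ h : p.2.2.1 = p.1.1, gmul p.1 p.2 h = x}, f p.1 * g p.2

/-- The subalgebra `A_R(S)` of Steinberg functions supported in a subset `S` of arrows. -/
def AOf (S : Set (GE C)) : Set (GE C → R) :=
  {f | f ∈ steinbergSet C R ∧ Function.support f ⊆ S}

/-- A subset `U` of the unit space is invariant if `s(g) ∈ U ↔ r(g) ∈ U`. -/
def IsInvariant (U : Set (GE C)) : Prop := ∀ g : GE C, srcU g ∈ U ↔ ranU g ∈ U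

end Top

end GE

section Aux
open GE

variable {C : Type*} [Groupoid C]

lemma gmul_of_right_unit (p₁ p₂ : GE C) (h : p₂.2.1 = p₁.1)
    (hu : p₂ ∈ GE.unitSpace C) : GE.gmul p₁ p₂ h = p₁ := by
  obtain ⟨c, rfl⟩ := hu
  simp only at h
  subst h
  simp [GE.gmul]

lemma gmul_of_left_unit (p₁ p₂ : GE C) (h : p₂.2.1 = p₁.1)
    (hu : p₁ ∈ GE.unitSpace C) : GE.gmul p₁ p₂ h = p₂ := by
  obtain ⟨c, rfl⟩ := hu
  simp only at h
  subst h
  simp [GE.gmul]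

end Aux

/-- In an ample Hausdorff groupoid, the core `A_R(Iso(G)°)` is contained in the centraliser
of the diagonal `A_R(G⁽⁰⁾)` in the Steinberg algebra. -/
theorem core_subset_centralizer_diagonal {C : Type*} [Groupoid C]
    [TopologicalSpace (GE C)] [T2Space (GE C)] [LocallyCompactSpace (GE C)]
    (htg : GE.IsTopologicalGroupoid C) (ham : GE.IsAmple C)
    (R : Type*) [CommRing R]
    (f g : GE C → R) (hf : f ∈ GE.AOf R (interior (GE.isoSet C)))
    (hg : g ∈ GE.AOf R (GE.unitSpace C)) :
    GE.conv R f g = GE.conv R g f := by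
  funext x
  have hsrc : GE.srcU x ∈ GE.unitSpace C := ⟨x.1, rfl⟩
  have hran : GE.ranU x ∈ GE.unitSpace C := ⟨x.2.1, rfl⟩
  have hL : GE.conv R f g x = f x * g (GE.srcU x) := by
    rw [GE.conv, finsum_mem_def]
    rw [finsum_eq_single _ ((x, GE.srcU x) : GE C × GE C)]
    · rw [Set.indicator_of_mem]
      exact ⟨rfl, gmul_of_right_unit x (GE.srcU x) rfl hsrc⟩
    · intro p hp
      by_cases hmem : p ∈ {p : GE C × GE C | ∃ h : p.2.2.1 = p.1.1, GE.gmul p.1 p.2 h = x}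
      · rw [Set.indicator_of_mem hmem]
        obtain ⟨h, hx⟩ := hmem
        by_cases hg2 : g p.2 = 0
        · rw [hg2, mul_zero]
        · have hu : p.2 ∈ GE.unitSpace C := hg.2 hg2
          have h1 : p.1 = x := by rw [← hx, gmul_of_right_unit _ _ h hu]
          obtain ⟨c, hc⟩ := hu
          have h2 : p.2 = GE.srcU x := by
            have : c = x.1 := by rw [hc] at h; rw [← h1]; exact h
            rw [hc, this]; rfl
          exact absurd (Prod.ext h1 h2) hp
      · exact Set.indicator_of_notMem hmem _
  have hR : GE.conv R g f x = g (GE.ranU x) * f x := by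
    rw [GE.conv, finsum_mem_def]
    rw [finsum_eq_single _ ((GE.ranU x, x) : GE C × GE C)]
    · rw [Set.indicator_of_mem]
      exact ⟨rfl, gmul_of_left_unit (GE.ranU x) x rfl hran⟩
    · intro p hp
      by_cases hmem : p ∈ {p : GE C × GE C | ∃ h : p.2.2.1 = p.1.1, GE.gmul p.1 p.2 h = x}
      · rw [Set.indicator_of_mem hmem]
        obtain ⟨h, hx⟩ := hmem
        by_cases hg1 : g p.1 = 0
        · rw [hg1, zero_mul]
        · have hu : p.1 ∈ GE.unitSpace C := hg.2 hg1
          have h2 : p.2 = x := by rw [← hx, gmul_of_left_unit _ _ h hu]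
          obtain ⟨c, hc⟩ := hu
          have h1 : p.1 = GE.ranU x := by
            have : c = x.2.1 := by rw [hc] at h; rw [← h2]; exact h.symm
            rw [hc, this]; rfl
          exact absurd (Prod.ext h1 h2) hp
      · exact Set.indicator_of_notMem hmem _
  rw [hL, hR]
  by_cases hfx : f x = 0
  · rw [hfx, mul_zero, zero_mul]
  · have hiso : x ∈ GE.isoSet C := interior_subset (hf.2 hfx)
    rw [GE.isoSet, Set.mem_setOf_eq] at hiso
    rw [hiso, mul_comm]
end

section
/- Let G be an ample Hausdorff groupoid, R a commutative ring with unit, and U an open closed invariant subset of the unit space G⁽⁰⁾. Then the centraliser of A_R(U) in the Steinberg algebra A_R(G) equals A_R(Iso(G)°) + A_R(G_{G⁽⁰⁾∖U}). -/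
open CategoryTheory

namespace GE

variable {C : Type*} [Groupoid C]

lemma gmul_srcU (g : GE C) : gmul g (srcU g) rfl = g := by
  simp [gmul, srcU]

lemma ranU_gmul (g : GE C) : gmul (ranU g) g rfl = g := by
  simp [gmul, ranU]

lemma pair_eq_right {x : GE C} {p : GE C × GE C}
    (hp : ∃ h : p.2.2.1 = p.1.1, gmul p.1 p.2 h = x)
    (hu : p.2 ∈ unitSpace C) : p = (x, srcU x) := by
  obtain ⟨g₁, g₂⟩ := p
  obtain ⟨a, rfl⟩ := hu
  obtain ⟨h, hx⟩ := hp
  simp only at h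
  subst h
  have h1 : gmul g₁ ⟨g₁.1, g₁.1, 𝟙 g₁.1⟩ rfl = g₁ := gmul_srcU g₁
  rw [h1] at hx
  subst hx
  rfl

lemma pair_eq_left {x : GE C} {p : GE C × GE C}
    (hp : ∃ h : p.2.2.1 = p.1.1, gmul p.1 p.2 h = x)
    (hu : p.1 ∈ unitSpace C) : p = (ranU x, x) := by
  obtain ⟨g₁, g₂⟩ := p
  obtain ⟨a, rfl⟩ := hu
  obtain ⟨h, hx⟩ := hp
  simp only at h
  subst h
  have h1 : g₂ = x := (ranU_gmul g₂).symm.trans hx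
  subst h1
  rfl

lemma isLocallyConstant_indicator {X R : Type*} [TopologicalSpace X] [Zero R]
    {S : Set X} (hSo : IsOpen S) (hSc : IsClosed S)
    {f : X → R} (hf : IsLocallyConstant f) : IsLocallyConstant (S.indicator f) := by
  rw [IsLocallyConstant.iff_exists_open]
  intro x
  by_cases hx : x ∈ S
  · obtain ⟨V, hVo, hxV, hV⟩ := hf.exists_open x
    refine ⟨S ∩ V, hSo.inter hVo, ⟨hx, hxV⟩, fun y hy => ?_⟩
    rw [Set.indicator_of_mem hy.1 f, Set.indicator_of_mem hx f]
    exact hV y hy.2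
  · refine ⟨Sᶜ, hSc.isOpen_compl, hx, fun y hy => ?_⟩
    rw [Set.indicator_of_notMem hy f, Set.indicator_of_notMem hx f]

section Top

variable [TopologicalSpace (GE C)] {R : Type*} [CommRing R]

lemma conv_right_unit (f g : GE C → R)
    (hg : Function.support g ⊆ unitSpace C) (x : GE C) :
    conv R f g x = f x * g (srcU x) := by
  have hmem : ((x, srcU x) : GE C × GE C) ∈
      {p : GE C × GE C | ∃ h : p.2.2.1 = p.1.1, gmul p.1 p.2 h = x} :=
    ⟨rfl, gmul_srcU x⟩
  have hzero : ∀ p : GE C × GE C, p ≠ (x, srcU x) →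
      Set.indicator {p : GE C × GE C | ∃ h : p.2.2.1 = p.1.1, gmul p.1 p.2 h = x}
        (fun p => f p.1 * g p.2) p = 0 := by
    intro p hp
    by_cases hm : p ∈ {p : GE C × GE C | ∃ h : p.2.2.1 = p.1.1, gmul p.1 p.2 h = x}
    · rw [Set.indicator_of_mem hm]
      by_cases hz : g p.2 = 0
      · rw [hz, mul_zero]
      · exact absurd (pair_eq_right hm (hg hz)) hp
    · exact Set.indicator_of_notMem hm _
  show (∑ᶠ p ∈ {p : GE C × GE C | ∃ h : p.2.2.1 = p.1.1, gmul p.1 p.2 h = x},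
      f p.1 * g p.2) = f x * g (srcU x)
  rw [finsum_mem_def, finsum_eq_single _ _ hzero, Set.indicator_of_mem hmem]

lemma conv_left_unit (f g : GE C → R)
    (hg : Function.support g ⊆ unitSpace C) (x : GE C) :
    conv R g f x = g (ranU x) * f x := by
  have hmem : ((ranU x, x) : GE C × GE C) ∈
      {p : GE C × GE C | ∃ h : p.2.2.1 = p.1.1, gmul p.1 p.2 h = x} :=
    ⟨rfl, ranU_gmul x⟩
  have hzero : ∀ p : GE C × GE C, p ≠ (ranU x, x) →
      Set.indicator {p : GE C × GE C | ∃ h : p.2.2.1 = p.1.1, gmul p.1 p.2 h = x}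
        (fun p => g p.1 * f p.2) p = 0 := by
    intro p hp
    by_cases hm : p ∈ {p : GE C × GE C | ∃ h : p.2.2.1 = p.1.1, gmul p.1 p.2 h = x}
    · rw [Set.indicator_of_mem hm]
      by_cases hz : g p.1 = 0
      · rw [hz, zero_mul]
      · exact absurd (pair_eq_left hm (hg hz)) hp
    · exact Set.indicator_of_notMem hm _
  show (∑ᶠ p ∈ {p : GE C × GE C | ∃ h : p.2.2.1 = p.1.1, gmul p.1 p.2 h = x},
      g p.1 * f p.2) = g (ranU x) * f x
  rw [finsum_mem_def, finsum_eq_single _ _ hzero, Set.indicator_of_mem hmem]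

lemma key_iso [T2Space (GE C)] (ham : IsAmple C)
    {U : Set (GE C)} (hU : U ⊆ unitSpace C) (hUopen : IsOpen U)
    {f : GE C → R}
    (hc : ∀ g ∈ AOf R U, conv R f g = conv R g f)
    {y : GE C} (hy : srcU y ∈ U) (hfy : f y ≠ 0) : srcU y = ranU y := by
  by_contra hne
  have hopen : IsOpen (U \ {ranU y}) := hUopen.sdiff isClosed_singleton
  have hmem : srcU y ∈ U \ {ranU y} := ⟨hy, by simpa using hne⟩
  obtain ⟨V, hVb, hxV, hVsub⟩ := ham.2.exists_subset_of_mem_open hmem hopen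
  have hVc : IsCompact V := hVb.1
  have hVcl : IsClosed V := hVc.isClosed
  set g : GE C → R := V.indicator (fun _ => (1 : R)) with hgdef
  have hsupp : Function.support g ⊆ V := Set.support_indicator_subset
  have hsubU : V ⊆ U := hVsub.trans Set.diff_subset
  have hgU : g ∈ AOf R U := by
    refine ⟨⟨isLocallyConstant_indicator hVb.2.1 hVcl (IsLocallyConstant.const 1), ?_⟩,
      hsupp.trans hsubU⟩
    exact HasCompactSupport.intro' hVc hVcl fun x hx => Set.indicator_of_notMem hx _
  have hgunit : Function.support g ⊆ unitSpace C := (hsupp.trans hsubU).trans hU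
  have heq := congrFun (hc g hgU) y
  rw [conv_right_unit f g hgunit y, conv_left_unit f g hgunit y] at heq
  have h1 : g (srcU y) = 1 := Set.indicator_of_mem hxV _
  have h0 : g (ranU y) = 0 := by
    refine Set.indicator_of_notMem (fun hr => ?_) _
    exact (hVsub hr).2 rfl
  rw [h1, h0, mul_one, zero_mul] at heq
  exact hfy heq

end Top

end GE

/-- Theorem (main): for an ample Hausdorff groupoid `G` and an open closed invariant
`U ⊆ G⁽⁰⁾`, the centraliser of `A_R(U)` in `A_R(G)` equals
`A_R(Iso(G)°) + A_R(G_{G⁽⁰⁾∖U})`. -/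
theorem centralizer_of_AOf_eq {C : Type*} [Groupoid C]
    [TopologicalSpace (GE C)] [T2Space (GE C)] [LocallyCompactSpace (GE C)]
    (htg : GE.IsTopologicalGroupoid C) (ham : GE.IsAmple C)
    (R : Type*) [CommRing R]
    (U : Set (GE C)) (hU : U ⊆ GE.unitSpace C) (hUopen : IsOpen U) (hUclosed : IsClosed U)
    (hUinv : GE.IsInvariant U) :
    {f : GE C → R | f ∈ GE.steinbergSet C R ∧
        ∀ g ∈ GE.AOf R U, GE.conv R f g = GE.conv R g f} =
      {f : GE C → R | ∃ f₁ ∈ GE.AOf R (interior (GE.isoSet C)),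
        ∃ f₂ ∈ GE.AOf (C := C) R {x : GE C | GE.srcU x ∉ U}, f = f₁ + f₂} := by
  ext f
  simp only [Set.mem_setOf_eq]
  constructor
  · rintro ⟨⟨hflc, hfcs⟩, hc⟩
    set S : Set (GE C) := (fun g : GE C => GE.srcU g) ⁻¹' U with hSdef
    have hscont : Continuous (fun g : GE C => GE.srcU g) := ham.1.continuous
    have hSo : IsOpen S := hUopen.preimage hscont
    have hScl : IsClosed S := hUclosed.preimage hscont
    refine ⟨S.indicator f, ?_, Sᶜ.indicator f, ?_, ?_⟩
    · refine ⟨⟨GE.isLocallyConstant_indicator hSo hScl hflc,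
        hfcs.mono (by rw [Set.support_indicator]; exact Set.inter_subset_right)⟩, ?_⟩
      intro x hx
      have hxS : x ∈ S := by
        by_contra h
        exact hx (Set.indicator_of_notMem h f)
      have hfx : f x ≠ 0 := by
        have hne : S.indicator f x ≠ 0 := hx
        rwa [Set.indicator_of_mem hxS f] at hne
      have hWopen : IsOpen (S ∩ Function.support f) := by
        refine hSo.inter ?_
        rw [Function.support_eq_preimage]
        exact hflc _
      refine mem_interior.mpr ⟨S ∩ Function.support f, ?_, hWopen, ⟨hxS, hfx⟩⟩
      rintro y ⟨hyS, hyf⟩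
      exact GE.key_iso ham hU hUopen hc hyS hyf
    · refine ⟨⟨GE.isLocallyConstant_indicator hScl.isOpen_compl hSo.isClosed_compl hflc,
        hfcs.mono (by rw [Set.support_indicator]; exact Set.inter_subset_right)⟩, ?_⟩
      exact Set.support_indicator_subset
    · exact (Set.indicator_self_add_compl S f).symm
  · rintro ⟨f₁, ⟨⟨h1lc, h1cs⟩, h1s⟩, f₂, ⟨⟨h2lc, h2cs⟩, h2s⟩, rfl⟩
    refine ⟨⟨h1lc.add h2lc, h1cs.add h2cs⟩, ?_⟩
    intro g hg
    have hgunit : Function.support g ⊆ GE.unitSpace C := hg.2.trans hU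
    funext x
    rw [GE.conv_right_unit _ g hgunit x, GE.conv_left_unit _ g hgunit x]
    by_cases hs : GE.srcU x ∈ U
    · have h2x : f₂ x = 0 := by
        by_contra h
        exact (h2s h) hs
      by_cases h1x : f₁ x = 0
      · simp [Pi.add_apply, h1x, h2x]
      · have hiso : x ∈ GE.isoSet C := interior_subset (h1s h1x)
        have heq : GE.srcU x = GE.ranU x := hiso
        rw [← heq, mul_comm]
    · have hgs : g (GE.srcU x) = 0 := by
        by_contra h
        exact hs (hg.2 h)
      have hgr : g (GE.ranU x) = 0 := by
        by_contra h
        exact hs ((hUinv x).mpr (hg.2 h))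
      rw [hgs, hgr, mul_zero, zero_mul]
end

section
/- Let G be an ample Hausdorff groupoid such that Iso(G)° is abelian (a bundle of abelian groups). Then A_R(Iso(G)°) is a maximal commutative subalgebra of the Steinberg algebra A_R(G). -/
open CategoryTheory

section AuxLemmas

open CategoryTheory GE

variable {C : Type*} [Groupoid C]

lemma aux_mem_isoSet_iff (g : GE C) : g ∈ isoSet C ↔ g.1 = g.2.1 := by
  constructor
  · intro h; exact congrArg Sigma.fst h
  · intro h
    obtain ⟨a, b, f⟩ := g
    dsimp at h
    subst h
    rfl

lemma aux_gmul_srcU (x : GE C) : gmul x (srcU x) rfl = x := by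
  obtain ⟨a, b, f⟩ := x
  simp [gmul, srcU]

lemma aux_gmul_ranU (x : GE C) : gmul (ranU x) x rfl = x := by
  obtain ⟨a, b, f⟩ := x
  simp [gmul, ranU]

lemma aux_factor_unit_right (x : GE C) (p : GE C × GE C)
    (hp : ∃ h : p.2.2.1 = p.1.1, gmul p.1 p.2 h = x)
    (hu : p.2 ∈ unitSpace C) : p = (x, srcU x) := by
  obtain ⟨g, u⟩ := p
  obtain ⟨a, rfl⟩ := hu
  obtain ⟨h, hx⟩ := hp
  dsimp at h
  subst h
  obtain ⟨b, c, f⟩ := g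
  simp [gmul] at hx
  subst hx
  simp [srcU]

lemma aux_factor_unit_left (x : GE C) (p : GE C × GE C)
    (hp : ∃ h : p.2.2.1 = p.1.1, gmul p.1 p.2 h = x)
    (hu : p.1 ∈ unitSpace C) : p = (ranU x, x) := by
  obtain ⟨u, g⟩ := p
  obtain ⟨a, rfl⟩ := hu
  obtain ⟨h, hx⟩ := hp
  obtain ⟨b, c, f⟩ := g
  dsimp at h
  subst h
  simp [gmul] at hx
  subst hx
  simp [ranU]

lemma aux_unitSpace_eq_range : unitSpace C = Set.range (srcU (C := C)) := by
  ext g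
  constructor
  · rintro ⟨a, rfl⟩; exact ⟨⟨a, a, 𝟙 a⟩, rfl⟩
  · rintro ⟨h, rfl⟩; exact ⟨h.1, rfl⟩

lemma aux_unitSpace_subset_isoSet : unitSpace C ⊆ isoSet C := by
  rintro g ⟨a, rfl⟩; rfl

section Top

variable [TopologicalSpace (GE C)]

lemma aux_isOpen_unitSpace (ham : IsAmple C) : IsOpen (unitSpace C) := by
  rw [aux_unitSpace_eq_range]
  exact ham.1.isOpenMap.isOpen_range

lemma aux_unitSpace_subset_interior (ham : IsAmple C) :
    unitSpace C ⊆ interior (isoSet C) :=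
  interior_maximal aux_unitSpace_subset_isoSet (aux_isOpen_unitSpace ham)

variable (R : Type*) [CommRing R]

lemma aux_isLocallyConstant_indicator {U : Set (GE C)} (hU : IsClopen U) :
    IsLocallyConstant (U.indicator (fun _ => (1 : R))) := by
  intro s
  by_cases h1 : (1 : R) ∈ s <;> by_cases h0 : (0 : R) ∈ s
  · have : U.indicator (fun _ => (1 : R)) ⁻¹' s = Set.univ := by
      ext x; by_cases hx : x ∈ U <;> simp [Set.indicator_apply, hx, h1, h0]
    rw [this]; exact isOpen_univ
  · have : U.indicator (fun _ => (1 : R)) ⁻¹' s = U := by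
      ext x; by_cases hx : x ∈ U <;> simp [Set.indicator_apply, hx, h1, h0]
    rw [this]; exact hU.2
  · have : U.indicator (fun _ => (1 : R)) ⁻¹' s = Uᶜ := by
      ext x; by_cases hx : x ∈ U <;> simp [Set.indicator_apply, hx, h1, h0]
    rw [this]; exact hU.1.isOpen_compl
  · have : U.indicator (fun _ => (1 : R)) ⁻¹' s = ∅ := by
      ext x; by_cases hx : x ∈ U <;> simp [Set.indicator_apply, hx, h1, h0]
    rw [this]; exact isOpen_empty

lemma aux_indicator_mem_AOf [T2Space (GE C)] (ham : IsAmple C) {U : Set (GE C)}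
    (hUc : IsCompact U) (hUo : IsOpen U) (hUu : U ⊆ unitSpace C) :
    U.indicator (fun _ => (1 : R)) ∈ AOf R (interior (isoSet C)) := by
  have hclopen : IsClopen U := ⟨hUc.isClosed, hUo⟩
  refine ⟨⟨aux_isLocallyConstant_indicator R hclopen, ?_⟩, ?_⟩
  · apply HasCompactSupport.of_support_subset_isCompact hUc
    exact Set.support_indicator_subset
  · exact (Set.support_indicator_subset).trans ((hUu).trans (aux_unitSpace_subset_interior ham))

/-- Convolution with a unit-space-supported indicator on the right. -/
lemma aux_conv_indicator_right (f : GE C → R) {U : Set (GE C)} (hUu : U ⊆ unitSpace C)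
    (x : GE C) :
    conv R f (U.indicator (fun _ => (1 : R))) x
      = f x * U.indicator (fun _ => (1 : R)) (srcU x) := by
  show ∑ᶠ p ∈ {p : GE C × GE C | ∃ h : p.2.2.1 = p.1.1, gmul p.1 p.2 h = x},
      f p.1 * U.indicator (fun _ => (1 : R)) p.2 = _
  rw [finsum_mem_inter_support_eq _ _ ({(x, srcU x)} : Set (GE C × GE C)) ?_]
  · rw [finsum_mem_singleton]
  · ext p
    simp only [Set.mem_inter_iff, Set.mem_setOf_eq, Function.mem_support, Set.mem_singleton_iff]
    constructor
    · rintro ⟨hp, hne⟩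
      have hu : p.2 ∈ U := by
        by_contra hu
        simp [Set.indicator_of_notMem hu] at hne
      exact ⟨aux_factor_unit_right x p hp (hUu hu), hne⟩
    · rintro ⟨rfl, hne⟩
      exact ⟨⟨rfl, aux_gmul_srcU x⟩, hne⟩

/-- Convolution with a unit-space-supported indicator on the left. -/
lemma aux_conv_indicator_left (f : GE C → R) {U : Set (GE C)} (hUu : U ⊆ unitSpace C)
    (x : GE C) :
    conv R (U.indicator (fun _ => (1 : R))) f x
      = U.indicator (fun _ => (1 : R)) (ranU x) * f x := by
  show ∑ᶠ p ∈ {p : GE C × GE C | ∃ h : p.2.2.1 = p.1.1, gmul p.1 p.2 h = x},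
      U.indicator (fun _ => (1 : R)) p.1 * f p.2 = _
  rw [finsum_mem_inter_support_eq _ _ ({(ranU x, x)} : Set (GE C × GE C)) ?_]
  · rw [finsum_mem_singleton]
  · ext p
    simp only [Set.mem_inter_iff, Set.mem_setOf_eq, Function.mem_support, Set.mem_singleton_iff]
    constructor
    · rintro ⟨hp, hne⟩
      have hu : p.1 ∈ U := by
        by_contra hu
        simp [Set.indicator_of_notMem hu] at hne
      exact ⟨aux_factor_unit_left x p hp (hUu hu), hne⟩
    · rintro ⟨rfl, hne⟩
      exact ⟨⟨rfl, aux_gmul_ranU x⟩, hne⟩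

/-- Commutativity of convolution for functions supported in the interior of the isotropy. -/
lemma aux_conv_comm
    (hab : ∀ g h : GE C, g ∈ interior (isoSet C) → h ∈ interior (isoSet C) →
      ∀ (hc : h.2.1 = g.1) (hc' : g.2.1 = h.1), gmul g h hc = gmul h g hc')
    (f g : GE C → R)
    (hf : Function.support f ⊆ interior (isoSet C))
    (hg : Function.support g ⊆ interior (isoSet C)) :
    conv R f g = conv R g f := by
  have key : ∀ (f g : GE C → R), Function.support f ⊆ interior (isoSet C) →
      Function.support g ⊆ interior (isoSet C) → ∀ (x : GE C)
      (p : GE C × GE C),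
      p ∈ {p : GE C × GE C | ∃ h : p.2.2.1 = p.1.1, gmul p.1 p.2 h = x} ∩
        Function.support (fun p : GE C × GE C => f p.1 * g p.2) →
      Prod.swap p ∈ {p : GE C × GE C | ∃ h : p.2.2.1 = p.1.1, gmul p.1 p.2 h = x} ∩
        Function.support (fun p : GE C × GE C => g p.1 * f p.2) := by
    intro f g hf hg x p ⟨⟨h, hx⟩, hne⟩
    simp only [Function.mem_support] at hne
    have hf1 : f p.1 ≠ 0 := fun h0 => hne (by simp [h0])
    have hg2 : g p.2 ≠ 0 := fun h0 => hne (by simp [h0])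
    have h1 : p.1 ∈ interior (isoSet C) := hf (Function.mem_support.2 hf1)
    have h2 : p.2 ∈ interior (isoSet C) := hg (Function.mem_support.2 hg2)
    have e1 : p.1.1 = p.1.2.1 := (aux_mem_isoSet_iff p.1).1 (interior_subset h1)
    have e2 : p.2.1 = p.2.2.1 := (aux_mem_isoSet_iff p.2).1 (interior_subset h2)
    have h' : p.1.2.1 = p.2.1 := by rw [← e1, ← h, ← e2]
    refine ⟨⟨h', ?_⟩, ?_⟩
    · show gmul p.2 p.1 h' = x
      rw [← hab p.1 p.2 h1 h2 h h', hx]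
    · show g p.2 * f p.1 ≠ 0
      rw [mul_comm]; exact fun h0 => hne h0
  funext x
  show ∑ᶠ p ∈ {p : GE C × GE C | ∃ h : p.2.2.1 = p.1.1, gmul p.1 p.2 h = x},
      f p.1 * g p.2
    = ∑ᶠ p ∈ {p : GE C × GE C | ∃ h : p.2.2.1 = p.1.1, gmul p.1 p.2 h = x},
      g p.1 * f p.2
  rw [← finsum_mem_inter_support (fun p : GE C × GE C => f p.1 * g p.2),
    ← finsum_mem_inter_support (fun p : GE C × GE C => g p.1 * f p.2)]
  refine finsum_mem_eq_of_bijOn Prod.swap ⟨key f g hf hg x, ?_, ?_⟩ ?_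
  · exact fun p _ q _ hpq => Prod.swap_injective hpq
  · intro q hq
    exact ⟨Prod.swap q, key g f hg hf x q hq, rfl⟩
  · intro p _
    exact mul_comm _ _

end Top

end AuxLemmas

/-- If `Iso(G)°` is abelian, then `A_R(Iso(G)°)` is a maximal commutative subalgebra of
`A_R(G)`: it is commutative and equals its own centraliser. -/
theorem core_maximal_commutative {C : Type*} [Groupoid C]
    [TopologicalSpace (GE C)] [T2Space (GE C)] [LocallyCompactSpace (GE C)]
    (htg : GE.IsTopologicalGroupoid C) (ham : GE.IsAmple C)
    (hab : ∀ g h : GE C, g ∈ interior (GE.isoSet C) → h ∈ interior (GE.isoSet C) →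
      ∀ (hc : h.2.1 = g.1) (hc' : g.2.1 = h.1), GE.gmul g h hc = GE.gmul h g hc')
    (R : Type*) [CommRing R] :
    (∀ f ∈ GE.AOf (C := C) R (interior (GE.isoSet C)),
        ∀ g ∈ GE.AOf (C := C) R (interior (GE.isoSet C)),
        GE.conv R f g = GE.conv R g f) ∧
      {f : GE C → R | f ∈ GE.steinbergSet C R ∧
          ∀ g ∈ GE.AOf R (interior (GE.isoSet C)), GE.conv R f g = GE.conv R g f} =
        GE.AOf R (interior (GE.isoSet C)) := by
  have hpart1 : ∀ f ∈ GE.AOf (C := C) R (interior (GE.isoSet C)),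
      ∀ g ∈ GE.AOf (C := C) R (interior (GE.isoSet C)),
      GE.conv R f g = GE.conv R g f :=
    fun f hf g hg => aux_conv_comm R hab f g hf.2 hg.2
  refine ⟨hpart1, Set.eq_of_subset_of_subset ?_ ?_⟩
  · rintro f ⟨hst, hcomm⟩
    refine ⟨hst, ?_⟩
    have hiso : ∀ x : GE C, f x ≠ 0 → x ∈ GE.isoSet C := by
      intro x hx
      by_contra hne
      have hne' : GE.srcU x ≠ GE.ranU x := hne
      have hu : GE.srcU x ∈ GE.unitSpace C := ⟨x.1, rfl⟩
      have hopen : IsOpen (GE.unitSpace C ∩ {GE.ranU x}ᶜ) :=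
        (aux_isOpen_unitSpace ham).inter isOpen_compl_singleton
      have hmem : GE.srcU x ∈ GE.unitSpace C ∩ {GE.ranU x}ᶜ := ⟨hu, hne'⟩
      obtain ⟨V, hV, hxV, hVsub⟩ := ham.2.exists_subset_of_mem_open hmem hopen
      obtain ⟨hVc, hVo, -⟩ := hV
      have hVu : V ⊆ GE.unitSpace C := fun y hy => (hVsub hy).1
      have h1 := congrFun (hcomm _ (aux_indicator_mem_AOf R ham hVc hVo hVu)) x
      rw [aux_conv_indicator_right R f hVu x, aux_conv_indicator_left R f hVu x,
        Set.indicator_of_mem hxV, Set.indicator_of_notMem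
          (fun hmem' => (hVsub hmem').2 rfl), mul_one, zero_mul] at h1
      exact hx h1
    intro x hx
    rw [Function.mem_support] at hx
    have hopen : IsOpen {y : GE C | f y = f x} := hst.1.isOpen_fiber (f x)
    have hsub : {y : GE C | f y = f x} ⊆ GE.isoSet C := fun y hy =>
      hiso y (by rw [Set.mem_setOf_eq] at hy; rw [hy]; exact hx)
    exact interior_maximal hsub hopen (by exact rfl)
  · rintro f hf
    exact ⟨hf.1, fun g hg => hpart1 f hf g hg⟩
end

section
/- Let G be an ample Hausdorff groupoid with Iso(G)° abelian. Then the Steinberg algebra A_R(G) is commutative if and only if the centre Z(A_R(G)) equals the centraliser of A_R(G⁽⁰⁾) in A_R(G). -/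
open CategoryTheory

section AuxCommLemma

open CategoryTheory

variable {C : Type*} [Groupoid C] [TopologicalSpace (GE C)]
variable (R : Type*) [CommRing R]

set_option linter.unusedSectionVars false in
lemma GE.conv_units_aux (d e : GE C → R)
    (hd : Function.support d ⊆ GE.unitSpace C) (he : Function.support e ⊆ GE.unitSpace C) :
    GE.conv R d e = fun x => d x * e x := by
  funext x
  unfold GE.conv
  by_cases hx : x ∈ GE.unitSpace C
  · obtain ⟨a, rfl⟩ := hx
    have key : ∑ᶠ p ∈ {p : GE C × GE C | ∃ h : p.2.2.1 = p.1.1, GE.gmul p.1 p.2 h =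
          (⟨a, a, 𝟙 a⟩ : GE C)}, d p.1 * e p.2 =
        ∑ᶠ p ∈ ({((⟨a, a, 𝟙 a⟩ : GE C), (⟨a, a, 𝟙 a⟩ : GE C))} : Set (GE C × GE C)),
          d p.1 * e p.2 := by
      apply finsum_mem_inter_support_eq'
      rintro ⟨p1, p2⟩ hp
      have hd1 : d p1 ≠ 0 := fun h0 => hp (by simp [h0])
      have he2 : e p2 ≠ 0 := fun h0 => hp (by simp [h0])
      obtain ⟨b, rfl⟩ := hd hd1
      obtain ⟨c, rfl⟩ := he he2
      constructor
      · rintro ⟨h, hg⟩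
        simp only at h
        subst h
        simp only [GE.gmul, eqToHom_refl, Category.comp_id, Category.id_comp] at hg
        obtain ⟨rfl, -⟩ := Sigma.mk.inj_iff.mp hg
        rfl
      · rintro h
        rw [Set.mem_singleton_iff, Prod.mk.injEq] at h
        obtain ⟨h1, h2⟩ := h
        obtain ⟨rfl, -⟩ := Sigma.mk.inj_iff.mp h1
        obtain ⟨rfl, -⟩ := Sigma.mk.inj_iff.mp h2
        exact ⟨rfl, by simp [GE.gmul]⟩
    rw [key, finsum_mem_singleton]
  · have hdx : d x = 0 := by
      by_contra h0
      exact hx (hd h0)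
    rw [hdx, zero_mul]
    apply finsum_mem_of_eqOn_zero
    rintro ⟨p1, p2⟩ ⟨h, hg⟩
    by_contra h0
    have hd1 : d p1 ≠ 0 := fun hz => h0 (by simp [hz])
    have he2 : e p2 ≠ 0 := fun hz => h0 (by simp [hz])
    obtain ⟨b, rfl⟩ := hd hd1
    obtain ⟨c, rfl⟩ := he he2
    simp only at h
    subst h
    simp only [GE.gmul, eqToHom_refl, Category.comp_id, Category.id_comp] at hg
    exact hx ⟨_, hg.symm⟩

end AuxCommLemma

/-- If `Iso(G)°` is abelian, the Steinberg algebra `A_R(G)` is commutative if and only if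
its centre equals the centraliser of the diagonal `A_R(G⁽⁰⁾)`. -/
theorem commutative_iff_center_eq_centralizer_diagonal {C : Type*} [Groupoid C]
    [TopologicalSpace (GE C)] [T2Space (GE C)] [LocallyCompactSpace (GE C)]
    (htg : GE.IsTopologicalGroupoid C) (ham : GE.IsAmple C)
    (hab : ∀ g h : GE C, g ∈ interior (GE.isoSet C) → h ∈ interior (GE.isoSet C) →
      ∀ (hc : h.2.1 = g.1) (hc' : g.2.1 = h.1), GE.gmul g h hc = GE.gmul h g hc')
    (R : Type*) [CommRing R] :
    (∀ f ∈ GE.steinbergSet C R, ∀ g ∈ GE.steinbergSet C R,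
        GE.conv R f g = GE.conv R g f) ↔
      {f : GE C → R | f ∈ GE.steinbergSet C R ∧
          ∀ g ∈ GE.steinbergSet C R, GE.conv R f g = GE.conv R g f} =
        {f : GE C → R | f ∈ GE.steinbergSet C R ∧
          ∀ g ∈ GE.AOf R (GE.unitSpace C), GE.conv R f g = GE.conv R g f} := by
  constructor
  · intro hcomm
    ext f
    simp only [Set.mem_setOf_eq]
    constructor
    · rintro ⟨hf, -⟩
      exact ⟨hf, fun g hg => hcomm f hf g hg.1⟩
    · rintro ⟨hf, -⟩
      exact ⟨hf, fun g hg => hcomm f hf g hg⟩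
  · intro hEq f hf g hg
    -- every element supported on the unit space is central
    have hunit_central : ∀ d ∈ GE.AOf R (GE.unitSpace C),
        ∀ s ∈ GE.steinbergSet C R, GE.conv R d s = GE.conv R s d := by
      intro d hd
      have hdc : d ∈ {f : GE C → R | f ∈ GE.steinbergSet C R ∧
          ∀ g ∈ GE.AOf R (GE.unitSpace C), GE.conv R f g = GE.conv R g f} := by
        refine ⟨hd.1, fun e he => ?_⟩
        rw [GE.conv_units_aux R d e hd.2 he.2, GE.conv_units_aux R e d he.2 hd.2]
        funext x
        exact mul_comm _ _
      rw [← hEq] at hdc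
      exact hdc.2
    -- hence every Steinberg function is in the centraliser of the diagonal, hence central
    have hf_central : ∀ s ∈ GE.steinbergSet C R, GE.conv R f s = GE.conv R s f := by
      have hfc : f ∈ {f : GE C → R | f ∈ GE.steinbergSet C R ∧
          ∀ g ∈ GE.AOf R (GE.unitSpace C), GE.conv R f g = GE.conv R g f} :=
        ⟨hf, fun d hd => (hunit_central d hd f hf).symm⟩
      rw [← hEq] at hfc
      exact hfc.2
    exact hf_central g hg
end
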